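/- arXiv:2307.08102 — 2 statements merged into one kernel-verified Lean document; each statement's English description precedes it below -/
import Mathlib

section
/- Let m ∈ ℕ, k ∈ {k_{m−1}, …, k_m−1} and s ∈ {0,1,2}^k. Then for every n ≥ m: r(G^0(s,n+1)) − r(G^0(s,n)) = l(G^1(s,n)) − l(G^1(s,n+1)) = d_{k_{n+1}−1} − d_{k_{n+1}}. -/
open Pointwise MeasureTheory

namespace CCS

/-- `dSeq a n` is the common length `d_n = ∏_{i=1}^n (1 - a_i)/2` of the intervals of the
`n`-th step of the construction of the central Cantor set `C(a)` (`d_0 = 1`).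
The sequence `a` is indexed from `1`; the value `a 0` is irrelevant. -/
noncomputable def dSeq (a : ℕ → ℝ) (n : ℕ) : ℝ :=
  ∏ i ∈ Finset.Icc 1 n, ((1 - a i) / 2)

/-- Left endpoint of the interval `I_t`, `t ∈ {0,1}^n` (coded as a list, the paper's
`t_j` being `t.getD (j-1) 0`): `l(I_t) = ∑_{j=1}^n t_j (d_{j-1} - d_j)`. -/
noncomputable def Il (a : ℕ → ℝ) (t : List ℕ) : ℝ :=
  ∑ j ∈ Finset.range t.length, (t.getD j 0 : ℝ) * (dSeq a j - dSeq a (j + 1))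

/-- The `n`-th step `C_n(a)` of the construction of the central Cantor set:
the union of the intervals `I_t = [l(I_t), l(I_t) + d_n]` over `t ∈ {0,1}^n`. -/
noncomputable def cantorStep (a : ℕ → ℝ) (n : ℕ) : Set ℝ :=
  ⋃ t ∈ {t : List ℕ | t.length = n ∧ ∀ j ∈ t, j ≤ 1},
    Set.Icc (Il a t) (Il a t + dSeq a n)

/-- The central Cantor set `C(a) = ⋂ₙ C_n(a)`. -/
noncomputable def cantorSet (a : ℕ → ℝ) : Set ℝ := ⋂ n, cantorStep a n

/-- Left endpoint of the interval `J_s = I_t - I_p`, for `s ∈ {0,1,2}^n`: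
`l(J_s) = -1 + ∑_{j=1}^n s_j (d_{j-1} - d_j)`. -/
noncomputable def Jl (a : ℕ → ℝ) (s : List ℕ) : ℝ :=
  -1 + ∑ j ∈ Finset.range s.length, (s.getD j 0 : ℝ) * (dSeq a j - dSeq a (j + 1))

/-- Right endpoint of `J_s`: `r(J_s) = l(J_s) + 2 d_n`. -/
noncomputable def Jr (a : ℕ → ℝ) (s : List ℕ) : ℝ :=
  Jl a s + 2 * dSeq a s.length

/-- The interval `J_s`. -/
noncomputable def Jset (a : ℕ → ℝ) (s : List ℕ) : Set ℝ := Set.Icc (Jl a s) (Jr a s)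

/-- Left endpoint of the gap `G^i_s` (`i = 0`: left gap, `i = 1`: right gap) of `J_s`. -/
noncomputable def Gl (a : ℕ → ℝ) (i : ℕ) (s : List ℕ) : ℝ :=
  Jl a s + (i : ℝ) * (dSeq a s.length - dSeq a (s.length + 1)) + 2 * dSeq a (s.length + 1)

/-- Right endpoint of the gap `G^i_s`. -/
noncomputable def Gr (a : ℕ → ℝ) (i : ℕ) (s : List ℕ) : ℝ :=
  Jl a s + ((i : ℝ) + 1) * (dSeq a s.length - dSeq a (s.length + 1))

/-- The gap `G^i_s ⊆ J_s`, an open interval. -/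
noncomputable def Gset (a : ℕ → ℝ) (i : ℕ) (s : List ℕ) : Set ℝ :=
  Set.Ioo (Gl a i s) (Gr a i s)

/-- `N(0,s) = max {j : s_j > 0}`, `N(1,s) = max {j : s_j < 2}` (1-based, `max ∅ = 0`). -/
noncomputable def Nidx (i : ℕ) (s : List ℕ) : ℕ :=
  sSup {j | 1 ≤ j ∧ j ≤ s.length ∧
    (if i = 0 then 0 < s.getD (j - 1) 0 else s.getD (j - 1) 0 < 2)}

/-- The family `𝒢^{i0}_{s0}(n)` of (indices of) gaps of rank `n`, for
`s0 ∈ {0,1,2}^{k_m - 1}`; a gap `G^i_s` is coded by the pair `(i, s)`.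
`𝒢^{i0}_{s0}(m) = {G^{i0}_{s0}}` and for `n > m`,
`𝒢^{i0}_{s0}(n)` consists of the gap `Ḡ^{i0}_{s0}(n)` together with the gaps
`Ḡ^1_{t^j}(n)`, `Ḡ^0_{t^(j+1)}(n)` for all `G^j_t ∈ 𝒢^{i0}_{s0}(l)`, `m ≤ l < n`. -/
def gapFamily (k : ℕ → ℕ) (i0 : ℕ) (s0 : List ℕ) (m : ℕ) (n : ℕ) : Set (ℕ × List ℕ) :=
  if n ≤ m then {(i0, s0)}
  else
    {(i0, s0 ++ List.replicate (k n - k m) (2 * i0))} ∪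
      ⋃ (l : ℕ) (_ : m ≤ l) (hl : l < n),
        ⋃ p ∈ gapFamily k i0 s0 m l,
          ({(1, p.2 ++ p.1 :: List.replicate (k n - k l - 1) 2),
            (0, p.2 ++ (p.1 + 1) :: List.replicate (k n - k l - 1) 0)} : Set (ℕ × List ℕ))
termination_by n
decreasing_by exact hl

/-- The family `𝒢^{i0}_{s0} = ⋃_{n ≥ m} 𝒢^{i0}_{s0}(n)`. -/
def gapFamilyAll (k : ℕ → ℕ) (i0 : ℕ) (s0 : List ℕ) (m : ℕ) : Set (ℕ × List ℕ) :=
  ⋃ (n : ℕ) (_ : m ≤ n), gapFamily k i0 s0 m n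

/-- The family `𝒢_t := 𝒢^0_{t ++ 0^{(k_m - |t| - 1)}} ∪ 𝒢^1_{t ++ 2^{(k_m - |t| - 1)}}`
for `t ∈ {0,1,2}^k` with `k_{m-1} ≤ k < k_m`. -/
def gapFamilyT (k : ℕ → ℕ) (m : ℕ) (t : List ℕ) : Set (ℕ × List ℕ) :=
  gapFamilyAll k 0 (t ++ List.replicate (k m - t.length - 1) 0) m ∪
    gapFamilyAll k 1 (t ++ List.replicate (k m - t.length - 1) 2) m

/-- The union `⋃ 𝒢` of a family of (indices of) gaps, as a subset of `ℝ`. -/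
noncomputable def gapUnion (a : ℕ → ℝ) (G : Set (ℕ × List ℕ)) : Set ℝ :=
  ⋃ p ∈ G, Gset a p.1 p.2

/-- `padSeq k c s m n` is the index of the gap `G^i(s,n)` (for `c = 2i`):
`s ++ c^{(k_m - |s| - 1)} ++ 1 ++ c^{(k_{m+1} - k_m - 1)} ++ 1 ++ ⋯ ++ 1 ++ c^{(k_n - k_{n-1} - 1)}`. -/
def padSeq (k : ℕ → ℕ) (c : ℕ) (s : List ℕ) (m : ℕ) : ℕ → List ℕ
  | 0 => s ++ List.replicate (k m - s.length - 1) c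
  | n + 1 =>
    if n + 1 ≤ m then s ++ List.replicate (k m - s.length - 1) c
    else padSeq k c s m n ++ 1 :: List.replicate (k (n + 1) - k n - 1) c

/-- `δ_n := min {3d_i - d_{i-1} : k_{n-1} + 1 ≤ i ≤ k_n - 1}` (as an element of `EReal`,
so that `min ∅ = ⊤ = ∞`). -/
noncomputable def deltaMin (a : ℕ → ℝ) (k : ℕ → ℕ) (n : ℕ) : EReal :=
  sInf ((fun i => ((3 * dSeq a i - dSeq a (i - 1) : ℝ) : EReal)) ''
    (Set.Icc (k (n - 1) + 1) (k n - 1)))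

/-- `Δ_n := max {3d_i - d_{i-1} : k_{n-1} + 1 ≤ i ≤ k_n - 1}` (`max ∅ = ⊥ = -∞`). -/
noncomputable def deltaMax (a : ℕ → ℝ) (k : ℕ → ℕ) (n : ℕ) : EReal :=
  sSup ((fun i => ((3 * dSeq a i - dSeq a (i - 1) : ℝ) : EReal)) ''
    (Set.Icc (k (n - 1) + 1) (k n - 1)))

/-- `m_n := min { δ_n - (d_{k_n - 1} - d_{k_n}), 4 d_{k_n} - Δ_n }`. -/
noncomputable def mSeq (a : ℕ → ℝ) (k : ℕ → ℕ) (n : ℕ) : EReal :=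
  min (deltaMin a k n - ((dSeq a (k n - 1) - dSeq a (k n) : ℝ) : EReal))
    (((4 * dSeq a (k n) : ℝ) : EReal) - deltaMax a k n)

/-- `∑_{i=n+1}^∞ (d_{k_i - 1} - d_{k_i})`. -/
noncomputable def tailSum (a : ℕ → ℝ) (k : ℕ → ℕ) (n : ℕ) : ℝ :=
  ∑' i : ℕ, (dSeq a (k (n + 1 + i) - 1) - dSeq a (k (n + 1 + i)))

/-- Condition `(*)`: `m_n ≥ 2 ∑_{i=n+1}^∞ (d_{k_i - 1} - d_{k_i})` for every `n ∈ ℕ`. -/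
def condStar (a : ℕ → ℝ) (k : ℕ → ℕ) : Prop :=
  ∀ n : ℕ, 1 ≤ n → ((2 * tailSum a k n : ℝ) : EReal) ≤ mSeq a k n

/-- `(k_n)_{n ≥ 1}` is the increasing enumeration of all indices greater than `k 0 = k₀`
at which `a` exceeds `1/3`. -/
def IsGapEnum (a : ℕ → ℝ) (k : ℕ → ℕ) : Prop :=
  StrictMono k ∧ (∀ n, 1 ≤ n → k 0 < k n ∧ 1 / 3 < a (k n)) ∧
    (∀ j, k 0 < j → 1 / 3 < a j → ∃ n, 1 ≤ n ∧ k n = j)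

/-- `G` is a gap of `E`: a bounded connected component of `ℝ ∖ E`. -/
def IsGapOf (E G : Set ℝ) : Prop :=
  (∃ x ∉ E, G = connectedComponentIn Eᶜ x) ∧ Bornology.IsBounded G

/-- `C` is a proper (nontrivial) connected component of `E`. -/
def IsProperComponentOf (E C : Set ℝ) : Prop :=
  (∃ x ∈ E, C = connectedComponentIn E x) ∧ C.Nontrivial

/-- `E` is a Cantorval: a perfect set with infinitely many gaps such that both endpoints
of every gap are accumulated both by gaps and by proper components of `E`. -/
def IsCantorval (E : Set ℝ) : Prop :=
  Perfect E ∧ {G : Set ℝ | IsGapOf E G}.Infinite ∧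
    ∀ G, IsGapOf E G → ∀ p, p = sInf G ∨ p = sSup G →
      (∀ ε > 0, ∃ G', IsGapOf E G' ∧ G' ≠ G ∧ G' ⊆ Set.Ioo (p - ε) (p + ε)) ∧
      (∀ ε > 0, ∃ C, IsProperComponentOf E C ∧ C ⊆ Set.Ioo (p - ε) (p + ε))

/-- `J_s` and `J_u` (of length `k_m - 1`) are associated:
`N := N(0,s) = N(1,u) ∈ {k_{m-1}+1, …, k_m - 1}`, `s|(N-1) = u|(N-1)`, `u_N = s_N - 1`.
Then `J_u` is the interval covering `𝒢^0_s` and `J_s` is the interval covering `𝒢^1_u`. -/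
def Associated (k : ℕ → ℕ) (m : ℕ) (s u : List ℕ) : Prop :=
  s.length = k m - 1 ∧ u.length = k m - 1 ∧
    Nidx 0 s = Nidx 1 u ∧
    k (m - 1) + 1 ≤ Nidx 0 s ∧ Nidx 0 s ≤ k m - 1 ∧
    s.take (Nidx 0 s - 1) = u.take (Nidx 0 s - 1) ∧
    u.getD (Nidx 0 s - 1) 0 = s.getD (Nidx 0 s - 1) 0 - 1

/-- `G^i_g ⊂_* J_v`: the gap `G^i_g` is covered by the interval `J_v`, i.e. `G^i_g`
belongs to a family `𝒢^0_w` (resp. `𝒢^1_w`) such that `J_v` is the interval covering it. -/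
def CoversGap (k : ℕ → ℕ) (i : ℕ) (g : List ℕ) (v : List ℕ) : Prop :=
  ∃ m w, 1 ≤ m ∧
    ((Associated k m w v ∧ (i, g) ∈ gapFamilyAll k 0 w m) ∨
      (Associated k m v w ∧ (i, g) ∈ gapFamilyAll k 1 w m))

/-- The achievement set `E(x) = {∑_{j ∈ A} x_j : A ⊆ ℕ}` of a series (indexed from `1`). -/
def achievementSet (x : ℕ → ℝ) : Set ℝ :=
  {y | ∃ A : Set ℕ, A ⊆ {n | 1 ≤ n} ∧ HasSum (A.indicator x) y}


private lemma getD_replicate' (c L j : ℕ) (h : j < L) : (List.replicate L c).getD j 0 = c := by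
  simp [List.getD_eq_getElem?_getD, List.getElem?_replicate, h]

private lemma Jl_append (a : ℕ → ℝ) (t u : List ℕ) :
    Jl a (t ++ u) = Jl a t + ∑ j ∈ Finset.range u.length,
      (u.getD j 0 : ℝ) * (dSeq a (t.length + j) - dSeq a (t.length + j + 1)) := by
  unfold Jl
  rw [List.length_append, Finset.sum_range_add, ← add_assoc]
  congr 1
  · congr 1
    exact Finset.sum_congr rfl fun j hj => by
      rw [List.getD_append _ _ _ _ (Finset.mem_range.mp hj)]
  · exact Finset.sum_congr rfl fun j hj => by
      rw [List.getD_append_right _ _ _ _ (Nat.le_add_right _ _), Nat.add_sub_cancel_left]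

private lemma padSeq_self (k : ℕ → ℕ) (c : ℕ) (s : List ℕ) (m : ℕ) :
    padSeq k c s m m = s ++ List.replicate (k m - s.length - 1) c := by
  cases m with
  | zero => rfl
  | succ m' => simp [padSeq]

private lemma padSeq_succ (k : ℕ → ℕ) (c : ℕ) (s : List ℕ) (m n : ℕ) (h : m ≤ n) :
    padSeq k c s m (n + 1)
      = padSeq k c s m n ++ 1 :: List.replicate (k (n + 1) - k n - 1) c := by
  rw [padSeq, if_neg (by omega)]

private lemma sum_cons_rep (a : ℕ → ℝ) (c B L : ℕ) :
    ∑ j ∈ Finset.range (L + 1),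
      (((1 :: List.replicate L c).getD j 0 : ℕ) : ℝ) * (dSeq a (B + j) - dSeq a (B + j + 1))
      = (dSeq a B - dSeq a (B + 1))
        + (c : ℝ) * (dSeq a (B + 1) - dSeq a (B + 1 + L)) := by
  rw [Finset.sum_range_succ']
  have h1 : ∀ j ∈ Finset.range L,
      (((1 :: List.replicate L c).getD (j + 1) 0 : ℕ) : ℝ)
        * (dSeq a (B + (j + 1)) - dSeq a (B + (j + 1) + 1))
      = (c : ℝ) * (dSeq a (B + 1 + j) - dSeq a (B + 1 + (j + 1))) := by
    intro j hj
    rw [List.getD_cons_succ, getD_replicate' c L j (Finset.mem_range.mp hj)]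
    have e1 : B + (j + 1) = B + 1 + j := by omega
    have e2 : B + (j + 1) + 1 = B + 1 + (j + 1) := by omega
    have e3 : B + 1 + j + 1 = B + 1 + (j + 1) := by omega
    rw [e1, e3]
  rw [Finset.sum_congr rfl h1, ← Finset.mul_sum,
    Finset.sum_range_sub' (fun j => dSeq a (B + 1 + j)) L]
  simp only [List.getD_cons_zero, Nat.cast_one, one_mul, Nat.add_zero, add_zero]
  ring

/-- Lemma: `r(G⁰(s,n+1)) - r(G⁰(s,n)) = l(G¹(s,n)) - l(G¹(s,n+1)) = d_{k_{n+1}-1} - d_{k_{n+1}}`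
for every `n ≥ m`. -/
theorem gap_endpoints_step (a : ℕ → ℝ) (k : ℕ → ℕ)
    (ha : ∀ n, 1 ≤ n → 0 < a n ∧ a n < 1)
    (hinf : {n : ℕ | 1 ≤ n ∧ 1 / 3 < a n}.Infinite)
    (hk0 : a (k 0 + 1) < 1 / 3)
    (hk : IsGapEnum a k)
    (m : ℕ) (hm : 1 ≤ m) (kk : ℕ) (hkk1 : k (m - 1) ≤ kk) (hkk2 : kk ≤ k m - 1)
    (s : List ℕ) (hs2 : ∀ x ∈ s, x ≤ 2) (hslen : s.length = kk) :
    ∀ n, m ≤ n →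
      Gr a 0 (padSeq k 0 s m (n + 1)) - Gr a 0 (padSeq k 0 s m n)
          = dSeq a (k (n + 1) - 1) - dSeq a (k (n + 1)) ∧
        Gl a 1 (padSeq k 2 s m n) - Gl a 1 (padSeq k 2 s m (n + 1))
          = dSeq a (k (n + 1) - 1) - dSeq a (k (n + 1)) := by
  obtain ⟨hmono, hpos, -⟩ := hk
  have hkm1 : 1 ≤ k m := by have := (hpos m hm).1; omega
  have hlen : ∀ c n, m ≤ n → (padSeq k c s m n).length = k n - 1 := by
    intro c n hn
    induction n, hn using Nat.le_induction with
    | base =>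
      rw [padSeq_self]
      rw [List.length_append, List.length_replicate, hslen]
      omega
    | succ n hn ih =>
      have h1 : k n < k (n + 1) := hmono (Nat.lt_succ_self n)
      have h2 : 1 ≤ k n := by have := (hpos n (le_trans hm hn)).1; omega
      rw [padSeq_succ k _ s m n hn, List.length_append, List.length_cons,
        List.length_replicate, ih]
      omega
  intro n hn
  have hkn : 1 ≤ k n := by have := (hpos n (le_trans hm hn)).1; omega
  have hlt : k n < k (n + 1) := hmono (Nat.lt_succ_self n)
  have e1 : k n - 1 + 1 = k n := by omega
  have e2 : k n - 1 + (k (n + 1) - k n - 1 + 1) = k (n + 1) - 1 := by omega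
  have e3 : k (n + 1) - 1 + 1 = k (n + 1) := by omega
  have e4 : k n + (k (n + 1) - k n - 1) = k (n + 1) - 1 := by omega
  constructor
  · rw [padSeq_succ k 0 s m n hn]
    simp only [Gr, Jl_append, List.length_append, List.length_cons,
      List.length_replicate, hlen 0 n hn, sum_cons_rep a 0 (k n - 1) (k (n + 1) - k n - 1)]
    rw [e2, e3, e1, e4]
    push_cast
    ring
  · rw [padSeq_succ k 2 s m n hn]
    simp only [Gl, Jl_append, List.length_append, List.length_cons,
      List.length_replicate, hlen 2 n hn, sum_cons_rep a 2 (k n - 1) (k (n + 1) - k n - 1)]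
    rw [e2, e3, e1, e4]
    push_cast
    ring

end CCS
end

section
/- Let m ∈ ℕ, s ∈ {0,1,2}^{k_m−1} and n > m. Then r(G^1(s, n)) < l(G^1_s) < r(G^1_s) < l(G^0(s^2, n)). -/
open Pointwise MeasureTheory

namespace CCS

lemma dSeq_pos' {a : ℕ → ℝ} (ha : ∀ n, 1 ≤ n → 0 < a n ∧ a n < 1) (j : ℕ) : 0 < dSeq a j := by
  apply Finset.prod_pos
  intro i hi
  have h := ha i (Finset.mem_Icc.mp hi).1
  linarith [h.2]

lemma dSeq_succ' (a : ℕ → ℝ) (j : ℕ) : dSeq a (j+1) = dSeq a j * ((1 - a (j+1))/2) :=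
  Finset.prod_Icc_succ_top (Nat.le_add_left 1 j) _

lemma three_dSeq_lt' {a : ℕ → ℝ} (ha : ∀ n, 1 ≤ n → 0 < a n ∧ a n < 1) (j : ℕ)
    (h3 : 1/3 < a (j+1)) : 3 * dSeq a (j+1) < dSeq a j := by
  have hp := dSeq_pos' ha j
  rw [dSeq_succ']
  nlinarith

lemma Il_concat' (a : ℕ → ℝ) (s : List ℕ) (c : ℕ) :
    Il a (s ++ [c]) = Il a s + (c : ℝ) * (dSeq a s.length - dSeq a (s.length + 1)) := by
  unfold Il
  rw [List.length_append, List.length_singleton, Finset.sum_range_succ]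
  congr 1
  · exact Finset.sum_congr rfl fun j hj => by
      rw [List.getD_append _ _ _ _ (Finset.mem_range.mp hj)]
  · rw [List.getD_append_right _ _ _ _ le_rfl]
    simp

lemma Il_replicate' (a : ℕ → ℝ) (s : List ℕ) (r c : ℕ) :
    Il a (s ++ List.replicate r c) = Il a s + (c : ℝ) * (dSeq a s.length - dSeq a (s.length + r)) := by
  induction r with
  | zero => simp
  | succ r ih =>
    rw [List.replicate_succ', ← List.append_assoc, Il_concat', ih, List.length_append,
      List.length_replicate]
    have : s.length + r + 1 = s.length + (r + 1) := by omega
    rw [this]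
    ring

lemma Il_pad_step {a : ℕ → ℝ} (g : List ℕ) (c K K' : ℕ) (hg : g.length = K - 1)
    (hK : 1 ≤ K) (hK' : K < K') :
    (g ++ 1 :: List.replicate (K' - K - 1) c).length = K' - 1 ∧
    Il a (g ++ 1 :: List.replicate (K' - K - 1) c) =
      Il a g + (dSeq a (K-1) - dSeq a K) + (c:ℝ) * (dSeq a K - dSeq a (K'-1)) := by
  constructor
  · simp [hg]; omega
  · rw [← List.singleton_append, ← List.append_assoc, Il_replicate', Il_concat']
    have e2 : (g ++ [1]).length = K := by simp [hg]; omega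
    rw [e2, hg]
    have e1 : K - 1 + 1 = K := by omega
    have e3 : K + (K' - K - 1) = K' - 1 := by omega
    rw [e1, e3]
    push_cast
    ring


/-- Lemma: for `s ∈ {0,1,2}^{k_m - 1}` and `n > m`,
`r(G¹(s, n)) < l(G¹_s) < r(G¹_s) < l(G⁰(s⌢2, n))`. -/
theorem gap_chain_right (a : ℕ → ℝ) (k : ℕ → ℕ)
    (ha : ∀ n, 1 ≤ n → 0 < a n ∧ a n < 1)
    (hinf : {n : ℕ | 1 ≤ n ∧ 1 / 3 < a n}.Infinite)
    (hk0 : a (k 0 + 1) < 1 / 3)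
    (hk : IsGapEnum a k)
    (m : ℕ) (hm : 1 ≤ m)
    (s : List ℕ) (hs2 : ∀ x ∈ s, x ≤ 2) (hslen : s.length = k m - 1)
    (n : ℕ) (hn : m < n) :
    Gr a 1 (padSeq k 2 s m n) < Gl a 1 s ∧
      Gl a 1 s < Gr a 1 s ∧
      Gr a 1 s < Gl a 0 (padSeq k 0 (s ++ [2]) (m + 1) n) := by
  have hkmono := hk.1
  have hk1 : ∀ l, 1 ≤ l → 1 ≤ k l := fun l hl => by
    have := (hk.2.1 l hl).1; omega
  have h3d : ∀ l, 1 ≤ l → 3 * dSeq a (k l) < dSeq a (k l - 1) := by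
    intro l hl
    have h1 := hk1 l hl
    have h3 := (hk.2.1 l hl).2
    have he : k l = (k l - 1) + 1 := by omega
    rw [he] at h3 ⊢
    exact three_dSeq_lt' ha _ h3
  have hdpos := dSeq_pos' ha
  have hGr1 : ∀ t : List ℕ, Gr a 1 t
      = -1 + Il a t + 2 * (dSeq a t.length - dSeq a (t.length+1)) := by
    intro t; simp only [Gr, Jl, Il]; push_cast; ring
  have hGl1 : ∀ t : List ℕ, Gl a 1 t
      = -1 + Il a t + (dSeq a t.length - dSeq a (t.length+1)) + 2 * dSeq a (t.length+1) := by
    intro t; simp only [Gl, Jl, Il]; push_cast; ring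
  have hGl0 : ∀ t : List ℕ, Gl a 0 t = -1 + Il a t + 2 * dSeq a (t.length+1) := by
    intro t; simp only [Gl, Jl, Il]; push_cast; ring
  have hkm1 : 1 ≤ k m := hk1 m hm
  have hslen1 : s.length + 1 = k m := by omega
  -- claim 2
  have claim2 : Gl a 1 s < Gr a 1 s := by
    have h3 := h3d m hm
    rw [hGl1, hGr1, hslen1, hslen]
    linarith
  -- step unfolding of padSeq
  have hstep : ∀ (c : ℕ) (s0 : List ℕ) (m0 n0 : ℕ), m0 ≤ n0 →
      padSeq k c s0 m0 (n0+1) = padSeq k c s0 m0 n0 ++ 1 :: List.replicate (k (n0+1) - k n0 - 1) c := by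
    intro c s0 m0 n0 hmn
    rw [padSeq, if_neg (by omega)]
  have hbase : ∀ (c : ℕ) (s0 : List ℕ) (m0 : ℕ),
      padSeq k c s0 m0 m0 = s0 ++ List.replicate (k m0 - s0.length - 1) c := by
    intro c s0 m0
    cases m0 with
    | zero => rfl
    | succ m' => rw [padSeq, if_pos le_rfl]
  -- claim 1
  have claim1 : ∀ n0, m + 1 ≤ n0 → (padSeq k 2 s m n0).length = k n0 - 1 ∧
      Gr a 1 (padSeq k 2 s m n0) < Gl a 1 s := by
    intro n0 hn0
    induction n0, hn0 using Nat.le_induction with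
    | base =>
      have hb : padSeq k 2 s m m = s := by
        rw [hbase]
        have : k m - s.length - 1 = 0 := by omega
        simp [this]
      rw [hstep 2 s m m le_rfl, hb]
      have hkm2 : k m < k (m+1) := hkmono (by omega)
      obtain ⟨hl, hIl⟩ := Il_pad_step (a := a) s 2 (k m) (k (m+1)) hslen hkm1 hkm2
      refine ⟨hl, ?_⟩
      rw [hGr1, hGl1, hl, hIl, hslen]
      have e1 : k (m+1) - 1 + 1 = k (m+1) := by omega
      have e2 : k m - 1 + 1 = k m := by omega
      rw [e1, e2]
      have := hdpos (k (m+1))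
      push_cast
      linarith
    | succ n0 hn0 ih =>
      obtain ⟨ihl, ihlt⟩ := ih
      have hkn1 : 1 ≤ k n0 := hk1 n0 (by omega)
      have hkn2 : k n0 < k (n0+1) := hkmono (by omega)
      rw [hstep 2 s m n0 (by omega)]
      obtain ⟨hl, hIl⟩ := Il_pad_step (a := a) (padSeq k 2 s m n0) 2 (k n0) (k (n0+1)) ihl hkn1 hkn2
      refine ⟨hl, ?_⟩
      have h3 := h3d n0 (by omega)
      have hp := hdpos (k (n0+1))
      have e1 : k (n0+1) - 1 + 1 = k (n0+1) := by omega
      have e2 : k n0 - 1 + 1 = k n0 := by omega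
      rw [hGr1, hl, hIl, e1]
      rw [hGr1 (padSeq k 2 s m n0), ihl, e2] at ihlt
      push_cast
      push_cast at ihlt
      linarith
  -- claim 3
  have claim3 : ∀ n0, m + 1 ≤ n0 → (padSeq k 0 (s ++ [2]) (m+1) n0).length = k n0 - 1 ∧
      Gr a 1 s < Gl a 0 (padSeq k 0 (s ++ [2]) (m+1) n0) := by
    intro n0 hn0
    induction n0, hn0 using Nat.le_induction with
    | base =>
      have hkm2 : k m < k (m+1) := hkmono (by omega)
      have hlu : (s ++ [2]).length = k m := by simp [hslen]; omega
      rw [hbase, hlu]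
      have hl : ((s ++ [2]) ++ List.replicate (k (m+1) - k m - 1) 0).length = k (m+1) - 1 := by
        simp [hslen]; omega
      refine ⟨hl, ?_⟩
      rw [hGr1, hGl0, hl, Il_replicate', Il_concat', hlu, hslen]
      have e1 : k (m+1) - 1 + 1 = k (m+1) := by omega
      have e2 : k m - 1 + 1 = k m := by omega
      have e3 : k m + (k (m+1) - k m - 1) = k (m+1) - 1 := by omega
      rw [e1, e2, e3]
      have := hdpos (k (m+1))
      push_cast
      linarith
    | succ n0 hn0 ih =>
      obtain ⟨ihl, ihlt⟩ := ih
      have hkn1 : 1 ≤ k n0 := hk1 n0 (by omega)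
      have hkn2 : k n0 < k (n0+1) := hkmono (by omega)
      rw [hstep 0 (s ++ [2]) (m+1) n0 (by omega)]
      obtain ⟨hl, hIl⟩ := Il_pad_step (a := a) (padSeq k 0 (s ++ [2]) (m+1) n0) 0 (k n0) (k (n0+1)) ihl hkn1 hkn2
      refine ⟨hl, ?_⟩
      have h3 := h3d n0 (by omega)
      have hp := hdpos (k (n0+1))
      have e1 : k (n0+1) - 1 + 1 = k (n0+1) := by omega
      have e2 : k n0 - 1 + 1 = k n0 := by omega
      rw [hGl0, hl, hIl, e1]
      rw [hGl0 (padSeq k 0 (s ++ [2]) (m+1) n0), ihl, e2] at ihlt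
      push_cast
      push_cast at ihlt
      linarith
  exact ⟨(claim1 n hn).2, claim2, (claim3 n hn).2⟩
end CCS
end
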